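/- arXiv:1804.08179 — 2 statements merged into one kernel-verified Lean document; each statement's English description precedes it below -/
import Mathlib

section
/- For every real r > 1, the integral I₁(r) = ∫₀^{2π} φ(r cos θ) cos θ dθ equals K(r) = π r + (2/r)√(r²−1) − 2r·arctan(√(r²−1)). -/
open Real

/-- The continuous piecewise linear saturation function. -/
noncomputable def phi (s : ℝ) : ℝ := if s < -1 then -1 else if s ≤ 1 then s else 1

/-- The function `K(r) = π r + (2/r)√(r²−1) − 2r·arctan(√(r²−1))`. -/
noncomputable def K (r : ℝ) : ℝ :=
  π * r + (2 / r) * Real.sqrt (r ^ 2 - 1) - 2 * r * Real.arctan (Real.sqrt (r ^ 2 - 1))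

lemma phi_eq (s : ℝ) : phi s = max (-1) (min s 1) := by
  unfold phi
  split_ifs with h1 h2
  · rw [min_eq_left (by linarith), max_eq_left (by linarith)]
  · rw [min_eq_left h2, max_eq_right (by linarith)]
  · rw [min_eq_right (by linarith), max_eq_right (by norm_num)]

lemma continuous_phi : Continuous phi := by
  have h : phi = fun s => max (-1) (min s 1) := funext phi_eq
  rw [h]; fun_prop

lemma phi_of_one_le {s : ℝ} (h : 1 ≤ s) : phi s = 1 := by
  rw [phi_eq, min_eq_right h]; norm_num

lemma phi_of_le_neg_one {s : ℝ} (h : s ≤ -1) : phi s = -1 := by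
  rw [phi_eq, min_eq_left (by linarith), max_eq_left h]

lemma phi_of_mem {s : ℝ} (h1 : -1 ≤ s) (h2 : s ≤ 1) : phi s = s := by
  rw [phi_eq, min_eq_left h2, max_eq_right h1]

theorem I1_eq_K (r : ℝ) (hr : 1 < r) :
    ∫ θ in (0:ℝ)..(2 * π), phi (r * Real.cos θ) * Real.cos θ = K r := by
  have hr0 : (0:ℝ) < r := by linarith
  set α := Real.arccos (1 / r) with hαdef
  have h1r : 1 / r < 1 := by rw [div_lt_one hr0]; linarith
  have h1rpos : 0 < 1 / r := by positivity
  have hcosα : Real.cos α = 1 / r := Real.cos_arccos (by linarith) h1r.le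
  have hα0 : 0 < α := Real.arccos_pos.2 h1r
  have hα2 : α < π / 2 := Real.arccos_lt_pi_div_two.2 h1rpos
  have hπ : 0 < π := Real.pi_pos
  have hsq : (1:ℝ) - (1/r)^2 = (r^2 - 1)/r^2 := by field_simp
  have hsqrt : Real.sqrt ((r^2 - 1)/r^2) = Real.sqrt (r^2 - 1) / r := by
    rw [Real.sqrt_div (by nlinarith : (0:ℝ) ≤ r^2 - 1), Real.sqrt_sq hr0.le]
  have hsinα : Real.sin α = Real.sqrt (r ^ 2 - 1) / r := by
    rw [hαdef, Real.sin_arccos, hsq, hsqrt]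
  have hαtan : α = Real.arctan (Real.sqrt (r ^ 2 - 1)) := by
    rw [hαdef, Real.arccos_eq_arctan h1rpos]
    congr 1
    rw [hsq, hsqrt]
    field_simp
  -- the integrand is continuous
  have hf : Continuous fun θ : ℝ => phi (r * Real.cos θ) * Real.cos θ :=
    (continuous_phi.comp (continuous_const.mul Real.continuous_cos)).mul Real.continuous_cos
  have hint : ∀ a b : ℝ, IntervalIntegrable
      (fun θ : ℝ => phi (r * Real.cos θ) * Real.cos θ) MeasureTheory.volume a b :=
    fun a b => hf.intervalIntegrable a b
  -- helper for the middle regime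
  have hphi_mid : ∀ θ : ℝ, -Real.cos α ≤ Real.cos θ → Real.cos θ ≤ Real.cos α →
      phi (r * Real.cos θ) = r * Real.cos θ := by
    intro θ h1 h2
    apply phi_of_mem
    · rw [hcosα] at h1
      have h3 := mul_le_mul_of_nonneg_left h1 hr0.le
      have h4 : r * -(1/r) = -1 := by field_simp
      linarith
    · rw [hcosα] at h2
      have h3 := mul_le_mul_of_nonneg_left h2 hr0.le
      have h4 : r * (1/r) = 1 := by field_simp
      linarith
  -- piece 1 : [0, α]
  have hp1 : ∫ θ in (0:ℝ)..α, phi (r * Real.cos θ) * Real.cos θ = Real.sin α := by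
    rw [intervalIntegral.integral_congr (g := fun θ => Real.cos θ) ?_, integral_cos,
      Real.sin_zero, sub_zero]
    intro θ hθ
    rw [Set.uIcc_of_le hα0.le] at hθ
    have h1 : Real.cos α ≤ Real.cos θ :=
      Real.cos_le_cos_of_nonneg_of_le_pi hθ.1 (by linarith) hθ.2
    rw [hcosα] at h1
    have h2 : 1 ≤ r * Real.cos θ := by
      calc (1:ℝ) = r * (1/r) := by field_simp
        _ ≤ r * Real.cos θ := mul_le_mul_of_nonneg_left h1 hr0.le
    simp [phi_of_one_le h2]
  -- piece 2 : [α, π - α]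
  have hp2 : ∫ θ in α..(π - α), phi (r * Real.cos θ) * Real.cos θ
      = r * ((π - 2*α)/2 - Real.sin α * Real.cos α) := by
    rw [intervalIntegral.integral_congr (g := fun θ => r * Real.cos θ ^ 2) ?_]
    · rw [intervalIntegral.integral_const_mul, integral_cos_sq, Real.cos_pi_sub,
        Real.sin_pi_sub]
      ring
    · intro θ hθ
      rw [Set.uIcc_of_le (by linarith)] at hθ
      have hle : Real.cos θ ≤ Real.cos α :=
        Real.cos_le_cos_of_nonneg_of_le_pi hα0.le (by linarith [hθ.2]) hθ.1
      have hge : Real.cos (π - α) ≤ Real.cos θ :=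
        Real.cos_le_cos_of_nonneg_of_le_pi (by linarith [hθ.1]) (by linarith) hθ.2
      rw [Real.cos_pi_sub] at hge
      simp only [hphi_mid θ hge hle]
      ring
  -- piece 3 : [π - α, π + α]
  have hp3 : ∫ θ in (π - α)..(π + α), phi (r * Real.cos θ) * Real.cos θ
      = 2 * Real.sin α := by
    rw [intervalIntegral.integral_congr (g := fun θ => -Real.cos θ) ?_,
      intervalIntegral.integral_neg, integral_cos]
    · rw [Real.sin_pi_sub]
      have : Real.sin (π + α) = -Real.sin α := by
        rw [Real.sin_add]; simp
      rw [this]; ring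
    · intro θ hθ
      rw [Set.uIcc_of_le (by linarith)] at hθ
      have hu : |π - θ| ≤ α := abs_le.2 ⟨by linarith [hθ.2], by linarith [hθ.1]⟩
      have h1 : Real.cos α ≤ Real.cos (π - θ) := by
        rw [← Real.cos_abs (π - θ)]
        exact Real.cos_le_cos_of_nonneg_of_le_pi (abs_nonneg _) (by linarith) hu
      rw [Real.cos_pi_sub, hcosα] at h1
      have h2 : r * Real.cos θ ≤ -1 := by
        have := mul_le_mul_of_nonneg_left h1 hr0.le
        have hrr : r * (1/r) = 1 := by field_simp
        nlinarith
      simp [phi_of_le_neg_one h2]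
  -- piece 4 : [π + α, 2π - α]
  have hp4 : ∫ θ in (π + α)..(2*π - α), phi (r * Real.cos θ) * Real.cos θ
      = r * ((π - 2*α)/2 - Real.sin α * Real.cos α) := by
    rw [intervalIntegral.integral_congr (g := fun θ => r * Real.cos θ ^ 2) ?_]
    · rw [intervalIntegral.integral_const_mul, integral_cos_sq]
      have h1 : Real.cos (2*π - α) = Real.cos α := Real.cos_two_pi_sub α
      have h2 : Real.sin (2*π - α) = -Real.sin α := by
        rw [Real.sin_sub]; simp [Real.sin_two_pi, Real.cos_two_pi]
      have h3 : Real.cos (π + α) = -Real.cos α := by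
        rw [Real.cos_add]; simp
      have h4 : Real.sin (π + α) = -Real.sin α := by
        rw [Real.sin_add]; simp
      rw [h1, h2, h3, h4]; ring
    · intro θ hθ
      rw [Set.uIcc_of_le (by linarith)] at hθ
      have hc : Real.cos θ = Real.cos (2*π - θ) := (Real.cos_two_pi_sub θ).symm
      have hle : Real.cos (2*π - θ) ≤ Real.cos α :=
        Real.cos_le_cos_of_nonneg_of_le_pi hα0.le (by linarith [hθ.1]) (by linarith [hθ.2])
      have hge : Real.cos (π - α) ≤ Real.cos (2*π - θ) :=
        Real.cos_le_cos_of_nonneg_of_le_pi (by linarith [hθ.2]) (by linarith) (by linarith [hθ.1])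
      rw [Real.cos_pi_sub] at hge
      rw [← hc] at hle hge
      simp only [hphi_mid θ hge hle]
      ring
  -- piece 5 : [2π - α, 2π]
  have hp5 : ∫ θ in (2*π - α)..(2*π), phi (r * Real.cos θ) * Real.cos θ = Real.sin α := by
    rw [intervalIntegral.integral_congr (g := fun θ => Real.cos θ) ?_, integral_cos]
    · have h2 : Real.sin (2*π - α) = -Real.sin α := by
        rw [Real.sin_sub]; simp [Real.sin_two_pi, Real.cos_two_pi]
      rw [Real.sin_two_pi, h2]; ring
    · intro θ hθ
      rw [Set.uIcc_of_le (by linarith)] at hθ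
      have hc : Real.cos θ = Real.cos (2*π - θ) := (Real.cos_two_pi_sub θ).symm
      have h1 : Real.cos α ≤ Real.cos (2*π - θ) :=
        Real.cos_le_cos_of_nonneg_of_le_pi (by linarith [hθ.2]) (by linarith) (by linarith [hθ.1])
      rw [← hc, hcosα] at h1
      have h2 : 1 ≤ r * Real.cos θ := by
        calc (1:ℝ) = r * (1/r) := by field_simp
          _ ≤ r * Real.cos θ := mul_le_mul_of_nonneg_left h1 hr0.le
      simp [phi_of_one_le h2]
  -- split the integral
  rw [← intervalIntegral.integral_add_adjacent_intervals (hint 0 α) (hint α (2*π)),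
    ← intervalIntegral.integral_add_adjacent_intervals (hint α (π - α)) (hint (π - α) (2*π)),
    ← intervalIntegral.integral_add_adjacent_intervals (hint (π - α) (π + α)) (hint (π + α) (2*π)),
    ← intervalIntegral.integral_add_adjacent_intervals (hint (π + α) (2*π - α)) (hint (2*π - α) (2*π))]
  rw [hp1, hp2, hp3, hp4, hp5, hsinα, hcosα, hαtan]
  unfold K
  have hrne : r ≠ 0 := ne_of_gt hr0
  field_simp
  ring
end

section
/- The function K(r) = π r + (2/r)√(r²−1) − 2r·arctan(√(r²−1)) is strictly increasing on the interval (1, ∞), its limit as r → 1⁺ is π, its limit as r → ∞ is 4, and K maps the open interval (1, ∞) bijectively onto the open interval (π, 4); i.e., K : (1,∞) → (π,4) is a diffeomorphism. -/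
open Real Filter Set

/-!
With `s = √(r² − 1)`, the identity `arctan s = π/2 − arctan s⁻¹` gives
`K r = 2s/r + 2r·arctan s⁻¹` and `K'(r) = 2(arctan u − u/(1 + u²))` for `u = s⁻¹`, which is positive
because `arctan u − u/(1 + u²)` vanishes at `0` and has derivative `2u²/(1 + u²)²`. As `r → ∞`,
`s/r → 1` and `s·arctan s⁻¹ → arctan' 0 = 1`, so `K r → 4`, while `K` is continuous at `1` with
`K 1 = π`. A continuous strictly increasing function on `(1, ∞)` maps it onto the open interval
between its one-sided limits, by the intermediate value theorem.
-/

open Topology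

section StrictMonoOnIoi

variable {α β : Type*} [LinearOrder β] [TopologicalSpace β] [OrderClosedTopology β]
  {f : α → β} {l L : β}

theorem StrictMonoOn.lt_of_tendsto_atTop [LinearOrder α] [NoMaxOrder α] {a : α}
    (hf : StrictMonoOn f (Ioi a)) (hL : Tendsto f atTop (𝓝 L)) {x : α} (hx : a < x) : f x < L := by
  have : Nonempty α := ⟨a⟩
  obtain ⟨x', hxx'⟩ := exists_gt x
  have hx' : a < x' := hx.trans hxx'
  refine (hf hx hx' hxx').trans_le (ge_of_tendsto hL ?_)
  filter_upwards [eventually_ge_atTop x'] with y hy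
  exact hf.monotoneOn hx' (hx'.trans_le hy) hy

variable [ConditionallyCompleteLinearOrder α] [TopologicalSpace α] [OrderTopology α]
  [DenselyOrdered α] [NoMaxOrder α] {a : α}

theorem StrictMonoOn.lt_of_tendsto_nhdsGT (hf : StrictMonoOn f (Ioi a))
    (hl : Tendsto f (𝓝[>] a) (𝓝 l)) {x : α} (hx : a < x) : l < f x := by
  obtain ⟨x', hax', hx'x⟩ := exists_between hx
  refine (le_of_tendsto hl ?_).trans_lt (hf hax' hx hx'x)
  filter_upwards [Ioo_mem_nhdsGT hax'] with y hy
  exact (hf hy.1 hax' hy.2).le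

theorem ContinuousOn.surjOn_Ioo_of_tendsto (hc : ContinuousOn f (Ioi a))
    (hl : Tendsto f (𝓝[>] a) (𝓝 l)) (hL : Tendsto f atTop (𝓝 L)) :
    SurjOn f (Ioi a) (Ioo l L) := by
  intro y ⟨hly, hyL⟩
  obtain ⟨x₁, hx₁y, hx₁⟩ :=
    ((hl.eventually_lt_const hly).and self_mem_nhdsWithin).exists
  obtain ⟨x₂, hyx₂, hx₂⟩ :=
    ((hL.eventually_const_lt hyL).and (eventually_gt_atTop a)).exists
  exact hc.surjOn_Icc hx₁ hx₂ ⟨hx₁y.le, hyx₂.le⟩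

theorem StrictMonoOn.bijOn_Ioo_of_tendsto (hf : StrictMonoOn f (Ioi a))
    (hc : ContinuousOn f (Ioi a)) (hl : Tendsto f (𝓝[>] a) (𝓝 l))
    (hL : Tendsto f atTop (𝓝 L)) : BijOn f (Ioi a) (Ioo l L) :=
  ⟨fun _ hx => ⟨hf.lt_of_tendsto_nhdsGT hl hx, hf.lt_of_tendsto_atTop hL hx⟩, hf.injOn,
    hc.surjOn_Ioo_of_tendsto hl hL⟩

end StrictMonoOnIoi

theorem Real.hasDerivAt_arctan_sub_div_one_add_sq (x : ℝ) :
    HasDerivAt (fun t => arctan t - t / (1 + t ^ 2)) (2 * x ^ 2 / (1 + x ^ 2) ^ 2) x := by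
  have hden : HasDerivAt (fun t : ℝ => 1 + t ^ 2) (2 * x) x := by
    simpa using (hasDerivAt_pow 2 x).const_add 1
  refine ((hasDerivAt_arctan x).sub ((hasDerivAt_id x).div hden (by positivity))).congr_deriv ?_
  simp only [id]
  field_simp
  ring

theorem Real.div_one_add_sq_lt_arctan {x : ℝ} (hx : 0 < x) : x / (1 + x ^ 2) < arctan x := by
  have hmono : StrictMonoOn (fun t => arctan t - t / (1 + t ^ 2)) (Ici 0) := by
    refine strictMonoOn_of_deriv_pos (convex_Ici 0)
      (fun t _ => (hasDerivAt_arctan_sub_div_one_add_sq t).continuousAt.continuousWithinAt) ?_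
    intro t ht
    rw [interior_Ici] at ht
    rw [(hasDerivAt_arctan_sub_div_one_add_sq t).deriv]
    have : 0 < t := ht
    positivity
  simpa using hmono self_mem_Ici hx.le hx

theorem Real.tendsto_mul_arctan_inv_atTop :
    Tendsto (fun x : ℝ => x * arctan x⁻¹) atTop (𝓝 1) := by
  have h := (hasDerivAt_arctan 0).tendsto_slope_zero_right.comp tendsto_inv_atTop_nhdsGT_zero
  simpa [Function.comp_def] using h

section K

variable {r : ℝ}

theorem sqrt_sq_sub_one_pos (hr : 1 < r) : 0 < √(r ^ 2 - 1) :=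
  sqrt_pos.mpr (by nlinarith)

theorem one_add_sqrt_sq_sub_one_sq (hr : 1 < r) : 1 + √(r ^ 2 - 1) ^ 2 = r ^ 2 := by
  rw [sq_sqrt (by nlinarith)]
  ring

theorem hasDerivAt_sqrt_sq_sub_one (hr : 1 < r) :
    HasDerivAt (fun x : ℝ => √(x ^ 2 - 1)) (r / √(r ^ 2 - 1)) r := by
  have hpos : 0 < r ^ 2 - 1 := by nlinarith
  have hsq : HasDerivAt (fun x : ℝ => x ^ 2 - 1) (2 * r) r := by
    simpa using (hasDerivAt_pow 2 r).sub_const 1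
  refine ((hasDerivAt_sqrt hpos.ne').comp r hsq).congr_deriv ?_
  field_simp

theorem hasDerivAt_K (hr : 1 < r) :
    HasDerivAt K (π - 2 * arctan √(r ^ 2 - 1) - 2 * √(r ^ 2 - 1) / r ^ 2) r := by
  have hr0 : r ≠ 0 := by positivity
  have hs := hasDerivAt_sqrt_sq_sub_one hr
  have := sqrt_sq_sub_one_pos hr
  have h := (((hasDerivAt_id r).const_mul π).add
    (((hasDerivAt_inv hr0).const_mul 2).mul hs)).sub
    (((hasDerivAt_id r).const_mul 2).mul ((hasDerivAt_arctan _).comp r hs))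
  refine (h.congr_deriv ?_).congr_of_eventuallyEq (Eventually.of_forall fun x => ?_)
  · simp only [id, Function.comp_apply, one_add_sqrt_sq_sub_one_sq hr]
    field_simp
    ring
  · simp [K, div_eq_mul_inv]

theorem K_eq_of_one_lt (hr : 1 < r) :
    K r = 2 * √(r ^ 2 - 1) / r + 2 * r * arctan (√(r ^ 2 - 1))⁻¹ := by
  rw [K, arctan_inv_of_pos (sqrt_sq_sub_one_pos hr)]
  ring

theorem K_deriv_pos (hr : 1 < r) : 0 < deriv K r := by
  have hs0 := sqrt_sq_sub_one_pos hr
  have harctan := div_one_add_sq_lt_arctan (inv_pos.mpr hs0)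
  rw [(hasDerivAt_K hr).deriv]
  set s := √(r ^ 2 - 1)
  rw [arctan_inv_of_pos hs0] at harctan
  rw [← one_add_sqrt_sq_sub_one_sq hr]
  field_simp at harctan ⊢
  linarith

theorem K_strictMonoOn : StrictMonoOn K (Ioi 1) :=
  strictMonoOn_of_deriv_pos (convex_Ioi 1)
    (fun _ hr => (hasDerivAt_K hr).continuousAt.continuousWithinAt)
    (fun _ hr => K_deriv_pos (by rwa [interior_Ioi] at hr))

theorem tendsto_K_nhdsGT_one : Tendsto K (𝓝[>] 1) (𝓝 π) := by
  have hc : ContinuousAt K 1 := by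
    unfold K
    fun_prop (disch := norm_num)
  simpa [K] using hc.continuousWithinAt.tendsto

theorem tendsto_sqrt_sq_sub_one_atTop : Tendsto (fun r : ℝ => √(r ^ 2 - 1)) atTop atTop :=
  tendsto_sqrt_atTop.comp (tendsto_atTop_add_const_right _ (-1) (tendsto_pow_atTop two_ne_zero))

theorem tendsto_sqrt_sq_sub_one_div_atTop :
    Tendsto (fun r : ℝ => √(r ^ 2 - 1) / r) atTop (𝓝 1) := by
  have h : Tendsto (fun r : ℝ => √(1 - (r ^ 2)⁻¹)) atTop (𝓝 1) := by
    simpa [Function.comp_def] using (continuous_sqrt.tendsto _).comp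
      ((tendsto_const_nhds (x := (1 : ℝ))).sub (tendsto_pow_atTop two_ne_zero).inv_tendsto_atTop)
  refine h.congr' ?_
  filter_upwards [eventually_gt_atTop 0] with r hr
  have : 1 - (r ^ 2)⁻¹ = (r ^ 2 - 1) / r ^ 2 := by field_simp
  rw [this, sqrt_div' _ (sq_nonneg r), sqrt_sq hr.le]

theorem tendsto_K_atTop : Tendsto K atTop (𝓝 4) := by
  rw [show (4 : ℝ) = 2 * 1 + 2 * 1⁻¹ * 1 by norm_num]
  have h := (tendsto_sqrt_sq_sub_one_div_atTop.const_mul 2).add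
    ((tendsto_sqrt_sq_sub_one_div_atTop.inv₀ one_ne_zero).const_mul 2 |>.mul
      (tendsto_mul_arctan_inv_atTop.comp tendsto_sqrt_sq_sub_one_atTop))
  refine h.congr' ?_
  filter_upwards [eventually_gt_atTop 1] with r hr
  have := sqrt_sq_sub_one_pos hr
  rw [K_eq_of_one_lt hr, Function.comp_apply]
  field_simp

end K

theorem K_diffeo :
    StrictMonoOn K (Set.Ioi (1:ℝ)) ∧
    Filter.Tendsto K (nhdsWithin 1 (Set.Ioi (1:ℝ))) (nhds π) ∧
    Filter.Tendsto K Filter.atTop (nhds 4) ∧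
    Set.BijOn K (Set.Ioi (1:ℝ)) (Set.Ioo π 4) ∧
    ∀ r ∈ Set.Ioi (1:ℝ), DifferentiableAt ℝ K r := by
  have hdiff : ∀ r ∈ Ioi (1 : ℝ), DifferentiableAt ℝ K r :=
    fun _ hr => (hasDerivAt_K hr).differentiableAt
  exact ⟨K_strictMonoOn, tendsto_K_nhdsGT_one, tendsto_K_atTop,
    K_strictMonoOn.bijOn_Ioo_of_tendsto (fun r hr => (hdiff r hr).continuousAt.continuousWithinAt)
      tendsto_K_nhdsGT_one tendsto_K_atTop, hdiff⟩
end
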